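/- Let p be an odd prime, let a be a positive integer, and let n be an integer with p ∤ n. Then, in the ring ℤ_p of p-adic integers, p^{a−1} · ∑_{k=1}^{p^a−1} C(2k, k) / (k·n^k) ≡ ∑_{k=1}^{p−1} C(2k, k) / (k·n^k) (mod p), where 1/(k·n^k) denotes the inverse of k·n^k in ℚ_p and each side lies in ℤ_p (on the left, p^{a−1}/k ∈ ℤ_p for 1 ≤ k ≤ p^a − 1). -/

import Mathlib

/-!
Split the left-hand sum according to whether `p ^ (a - 1)` divides `k`. If it does not, then
`p ^ (a - 1) / k` already lies in `p ℤ_p`. If it does, `k = p ^ (a - 1) * j` with `1 ≤ j ≤ p - 1`,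
and the term pairs off with the `j`-th term on the right: by Lucas's theorem
`C(2k, k) ≡ C(2j, j)` and by Fermat's little theorem `n ^ k ≡ n ^ j` modulo `p`.
-/

open Finset

namespace Nat

lemma filter_dvd_Icc_one_eq_image_mul {q : ℕ} (hq : 0 < q) (m : ℕ) :
    {k ∈ Icc 1 (q * m - 1) | q ∣ k} = (Icc 1 (m - 1)).image (q * ·) := by
  ext k
  simp only [mem_filter, mem_Icc, mem_image]
  constructor
  · rintro ⟨⟨hk1, hkm⟩, c, rfl⟩
    have hc : c < m := Nat.lt_of_mul_lt_mul_left (a := q) (by omega)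
    exact ⟨c, ⟨Nat.pos_of_ne_zero (by rintro rfl; simp at hk1), by omega⟩, rfl⟩
  · rintro ⟨c, ⟨hc1, hcm⟩, rfl⟩
    have : q * c ≤ q * (m - 1) := Nat.mul_le_mul_left q hcm
    refine ⟨⟨Nat.mul_pos hq hc1, ?_⟩, dvd_mul_right q c⟩
    rw [Nat.mul_sub_one] at this
    omega

end Nat

lemma Int.pow_prime_pow_modEq (p : ℕ) [Fact p.Prime] (n : ℤ) (b : ℕ) :
    n ^ p ^ b ≡ n [ZMOD p] := by
  rw [← ZMod.intCast_eq_intCast_iff]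
  push_cast
  exact ZMod.pow_card_pow _

namespace Padic

variable {p : ℕ} [Fact p.Prime]

lemma norm_intCast_eq_one_of_not_dvd {z : ℤ} (hz : ¬ (p : ℤ) ∣ z) : ‖(z : ℚ_[p])‖ = 1 :=
  (norm_int_le_one z).antisymm (not_lt.mp (mt norm_intCast_lt_one_iff.mp hz))

lemma norm_intCast_div_sub_div_le {x y u w : ℤ} (hu : ¬ (p : ℤ) ∣ u) (hw : ¬ (p : ℤ) ∣ w)
    (h : x * w ≡ y * u [ZMOD p]) :
    ‖(x / u - y / w : ℚ_[p])‖ ≤ (p : ℝ) ^ (-1 : ℤ) := by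
  have hu1 := norm_intCast_eq_one_of_not_dvd hu
  have hw1 := norm_intCast_eq_one_of_not_dvd hw
  have hu0 : (u : ℚ_[p]) ≠ 0 := norm_ne_zero_iff.mp (by rw [hu1]; exact one_ne_zero)
  have hw0 : (w : ℚ_[p]) ≠ 0 := norm_ne_zero_iff.mp (by rw [hw1]; exact one_ne_zero)
  rw [div_sub_div _ _ hu0 hw0, norm_div, norm_mul, hu1, hw1, mul_one, div_one,
    mul_comm (u : ℚ_[p])]
  have hdvd := (norm_int_le_pow_iff_dvd (x * w - y * u) 1).2 (by simpa using h.symm.dvd)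
  exact_mod_cast hdvd

lemma norm_prime_pow_div_natCast_le {b k : ℕ} (hk : k ≠ 0) (hdvd : ¬ p ^ b ∣ k) :
    ‖(p : ℚ_[p]) ^ b / k‖ ≤ (p : ℝ) ^ (-1 : ℤ) := by
  have hv : padicValNat p k < b := not_le.mp (mt (padicValNat_dvd_iff_le hk).mpr hdvd)
  have hp : (1 : ℝ) ≤ p := mod_cast (Fact.out : p.Prime).one_le
  rw [norm_div, norm_p_pow, norm_eq_zpow_neg_valuation (by exact_mod_cast hk), valuation_natCast,
    ← zpow_sub₀ (by positivity)]
  exact zpow_le_zpow_right₀ hp (by omega)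

lemma norm_prime_pow_mul_div_le {b k : ℕ} (hk : k ≠ 0) (hdvd : ¬ p ^ b ∣ k) {x y : ℚ_[p]}
    (hx : ‖x‖ ≤ 1) (hy : ‖y‖ = 1) :
    ‖(p : ℚ_[p]) ^ b * (x / (k * y))‖ ≤ (p : ℝ) ^ (-1 : ℤ) := by
  rw [show (p : ℚ_[p]) ^ b * (x / (k * y)) = (p : ℚ_[p]) ^ b / k * x / y by ring, norm_div,
    norm_mul, hy, div_one]
  exact mul_le_of_le_one_right (norm_nonneg _) hx |>.trans (norm_prime_pow_div_natCast_le hk hdvd)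

end Padic

open Padic

lemma norm_prime_pow_mul_choose_div_sub_le {p : ℕ} [Fact p.Prime] (b : ℕ) {j : ℕ} (hj : ¬ p ∣ j)
    {n : ℤ} (hn : ¬ (p : ℤ) ∣ n) :
    ‖(p : ℚ_[p]) ^ b * (((2 * (p ^ b * j)).choose (p ^ b * j) : ℚ_[p]) /
        (((p ^ b * j : ℕ) : ℚ_[p]) * (n : ℚ_[p]) ^ (p ^ b * j))) -
      ((2 * j).choose j : ℚ_[p]) / ((j : ℚ_[p]) * (n : ℚ_[p]) ^ j)‖ ≤ (p : ℝ) ^ (-1 : ℤ) := by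
  have hpZ : Prime (p : ℤ) := Nat.prime_iff_prime_int.mp Fact.out
  have hunit (m : ℕ) : ¬ (p : ℤ) ∣ j * n ^ m :=
    hpZ.not_dvd_mul (mod_cast hj) (mt hpZ.dvd_of_dvd_pow hn)
  have hp0 : (p : ℚ_[p]) ≠ 0 := Nat.cast_ne_zero.mpr (Fact.out : p.Prime).ne_zero
  have hcancel : (p : ℚ_[p]) ^ b * (((2 * (p ^ b * j)).choose (p ^ b * j) : ℚ_[p]) /
        (((p ^ b * j : ℕ) : ℚ_[p]) * (n : ℚ_[p]) ^ (p ^ b * j))) =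
      ((2 * (p ^ b * j)).choose (p ^ b * j) : ℚ_[p]) /
        ((j : ℚ_[p]) * (n : ℚ_[p]) ^ (p ^ b * j)) := by
    push_cast
    field_simp
  have hlucas : ((2 * (p ^ b * j)).choose (p ^ b * j) : ℤ) ≡ (2 * j).choose j [ZMOD p] := by
    rw [mul_left_comm]
    exact Choose.choose_pow_mul_pow_mul_modEq_choose
  have hcongr : ((2 * (p ^ b * j)).choose (p ^ b * j) : ℤ) * (j * n ^ j) ≡
      (2 * j).choose j * (j * n ^ (p ^ b * j)) [ZMOD p] := by
    rw [pow_mul]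
    gcongr
    exact (Int.pow_prime_pow_modEq p n b).symm
  rw [hcancel]
  exact_mod_cast norm_intCast_div_sub_div_le (hunit _) (hunit _) hcongr

theorem sum_central_div_k_pow_reduction_general (p : ℕ) [Fact p.Prime]
    (a : ℕ) (ha : 0 < a) (n : ℤ) (hn : ¬ (p : ℤ) ∣ n) :
    ‖(p : ℚ_[p]) ^ (a - 1) *
        (∑ k ∈ Finset.Icc 1 (p ^ a - 1),
          ((2 * k).choose k : ℚ_[p]) / ((k : ℚ_[p]) * (n : ℚ_[p]) ^ k)) -
      (∑ k ∈ Finset.Icc 1 (p - 1),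
        ((2 * k).choose k : ℚ_[p]) / ((k : ℚ_[p]) * (n : ℚ_[p]) ^ k))‖
      ≤ (p : ℝ) ^ (-1 : ℤ) := by
  obtain ⟨b, rfl⟩ : ∃ b, a = b + 1 := ⟨a - 1, by omega⟩
  have hpb : 0 < p ^ b := pow_pos (Fact.out : p.Prime).pos b
  have hnorm_n : ‖(n : ℚ_[p])‖ = 1 := norm_intCast_eq_one_of_not_dvd hn
  rw [Nat.add_sub_cancel, pow_succ, mul_sum, ← sum_filter_add_sum_filter_not _ (p ^ b ∣ ·),
    Nat.filter_dvd_Icc_one_eq_image_mul hpb,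
    sum_image fun _ _ _ _ h ↦ Nat.eq_of_mul_eq_mul_left hpb h, add_sub_right_comm,
    ← sum_sub_distrib]
  refine (nonarchimedean _ _).trans (max_le ?_ ?_) <;>
    refine IsUltrametricDist.norm_sum_le_of_forall_le_of_nonneg (by positivity) fun k hk ↦ ?_
  · obtain ⟨hk1, hkp⟩ := mem_Icc.mp hk
    exact norm_prime_pow_mul_choose_div_sub_le b (Nat.not_dvd_of_pos_of_lt hk1 (by omega)) hn
  · obtain ⟨hk, hdvd⟩ := mem_filter.mp hk
    exact norm_prime_pow_mul_div_le (Nat.one_le_iff_ne_zero.mp (mem_Icc.mp hk).1) hdvd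
      (IsUltrametricDist.norm_natCast_le_one _ _) (by rw [norm_pow, hnorm_n, one_pow])

theorem sum_central_div_k_pow_reduction (p : ℕ) [Fact p.Prime] (hp : Odd p)
    (a : ℕ) (ha : 0 < a) (n : ℤ) (hn : ¬ (p : ℤ) ∣ n) :
    ‖(p : ℚ_[p]) ^ (a - 1) *
        (∑ k ∈ Finset.Icc 1 (p ^ a - 1),
          ((2 * k).choose k : ℚ_[p]) / ((k : ℚ_[p]) * (n : ℚ_[p]) ^ k)) -
      (∑ k ∈ Finset.Icc 1 (p - 1),
        ((2 * k).choose k : ℚ_[p]) / ((k : ℚ_[p]) * (n : ℚ_[p]) ^ k))‖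
      ≤ (p : ℝ) ^ (-1 : ℤ) :=
  sum_central_div_k_pow_reduction_general p a ha n hn
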